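/- Fix positive integer parameters n, m, k, c with 1 < k < n and 1 < c < m, a real n×m data matrix X, and a row-stochastic k×n matrix β; set Y = βX. Then there exist a row-stochastic n×k matrix α, a column-stochastic m×c matrix θ, and a column-stochastic c×m matrix γ that minimize RSS = ‖X − α(Yθ)γ‖² over all such triples (α, θ, γ), and such that every column of the biarchetype matrix Z = Yθ = βXθ, viewed as a point of ℝ^k, belongs to the frontier (topological boundary) of the convex hull of the set of columns of Y. -/

import Mathlib

/-!
Changing `(θ, γ)` into another column-stochastic pair with the same product `Yθγ` does not
change the RSS, so it suffices to take any minimizer (one exists since the sets of stochastic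
matrices are compact) and to move the columns of `Yθ` onto the frontier of the compact set
`C = conv (columns of Y)` while keeping `Yθγ`. The columns of `Yθ'` with `θ'` column-stochastic
range over all of `C`, so everything follows from a geometric fact: `c ≥ 2` points
`zᵢ` of a compact set `C` in a nontrivial normed space lie in the convex hull of `c` frontier
points. Indeed, push `z₀` away from `z₁` to a frontier point `b₀`, and every other `zᵢ` away
from `b₀` to a frontier point `bᵢ`; then `zᵢ ∈ [b₀, bᵢ]` for `i ≠ 0`, and `z₀ ∈ [z₁, b₀]`.
Each column of `Yθγ` lies in `conv {zᵢ} ⊆ conv {bᵢ}`, which yields `γ'`.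
-/

open Matrix

/-- Row-stochastic: nonnegative entries, each row sums to 1. -/
def RowStoch {n k : ℕ} (A : Matrix (Fin n) (Fin k) ℝ) : Prop :=
  (∀ i j, 0 ≤ A i j) ∧ ∀ i, ∑ j, A i j = 1

/-- Column-stochastic: nonnegative entries, each column sums to 1. -/
def ColStoch {m c : ℕ} (A : Matrix (Fin m) (Fin c) ℝ) : Prop :=
  (∀ i j, 0 ≤ A i j) ∧ ∀ j, ∑ i, A i j = 1

/-- Squared Frobenius norm. -/
def frob2 {n m : ℕ} (M : Matrix (Fin n) (Fin m) ℝ) : ℝ :=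
  ∑ i, ∑ j, (M i j) ^ 2

open Set

section Frontier

variable {E : Type*} [NormedAddCommGroup E] [NormedSpace ℝ E] {C : Set E}

theorem IsCompact.exists_one_le_add_smul_mem_frontier (hC : IsCompact C) {x v : E} (hv : v ≠ 0)
    (hxv : x + v ∈ C) : ∃ t : ℝ, 1 ≤ t ∧ x + t • v ∈ frontier C := by
  set g : ℝ → E := fun s => x + s • v
  have hg : Topology.IsClosedEmbedding g :=
    (Homeomorph.addLeft x).isClosedEmbedding.comp (isClosedEmbedding_smul_left hv)
  have hT : IsCompact (g ⁻¹' C) := hg.isCompact_preimage hC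
  have h1 : (1 : ℝ) ∈ g ⁻¹' C := by simpa [g] using hxv
  have hle : g ⁻¹' C ⊆ Iic (sSup (g ⁻¹' C)) := fun s hs => le_csSup hT.bddAbove hs
  refine ⟨sSup (g ⁻¹' C), mem_Iic.1 (hle h1), hg.continuous.frontier_preimage_subset C ?_⟩
  refine ⟨subset_closure (hT.sSup_mem ⟨1, h1⟩), fun hint => ?_⟩
  have := interior_mono hle hint
  rw [interior_Iic] at this
  exact lt_irrefl _ (mem_Iio.1 this)

theorem IsCompact.exists_mem_frontier_mem_segment [Nontrivial E] (hC : IsCompact C) {x y : E}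
    (hx : x ∈ C) (hy : y ∈ C) : ∃ b ∈ frontier C, y ∈ segment ℝ x b := by
  rcases eq_or_ne x y with rfl | hxy
  · obtain ⟨b, hb⟩ := nonempty_frontier_iff.2 ⟨⟨x, hx⟩, fun h => noncompact_univ E (h ▸ hC)⟩
    exact ⟨b, hb, left_mem_segment ℝ x b⟩
  obtain ⟨t, ht, hb⟩ :=
    hC.exists_one_le_add_smul_mem_frontier (x := x) (sub_ne_zero.2 hxy.symm) (by simpa using hy)
  refine ⟨_, hb, ?_⟩
  rw [segment_eq_image']
  refine ⟨t⁻¹, ⟨by positivity, inv_le_one_of_one_le₀ ht⟩, ?_⟩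
  simp [smul_smul, inv_mul_cancel₀ (zero_lt_one.trans_le ht).ne']

theorem IsCompact.exists_frontier_convexHull_range [Nontrivial E] {ι : Type*} [Nontrivial ι]
    (hC : IsCompact C) {z : ι → E} (hz : ∀ i, z i ∈ C) :
    ∃ b : ι → E, (∀ i, b i ∈ frontier C) ∧ ∀ i, z i ∈ convexHull ℝ (range b) := by
  classical
  obtain ⟨i₀, i₁, hne⟩ := exists_pair_ne ι
  obtain ⟨b₀, hb₀, hz₀⟩ := hC.exists_mem_frontier_mem_segment (hz i₁) (hz i₀)
  choose b hb hzb using fun i =>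
    hC.exists_mem_frontier_mem_segment (hC.isClosed.frontier_subset hb₀) (hz i)
  set b' := Function.update b i₀ b₀
  have hb₀' : b₀ ∈ convexHull ℝ (range b') := subset_convexHull ℝ _ ⟨i₀, by simp [b']⟩
  have hz' : ∀ i ≠ i₀, z i ∈ convexHull ℝ (range b') := fun i hi =>
    segment_subset_convexHull (mem_range.2 ⟨i₀, by simp [b']⟩) (mem_range.2 ⟨i, by simp [b', hi]⟩)
      (hzb i)
  refine ⟨b', fun i => ?_, fun i => ?_⟩ <;> rcases eq_or_ne i i₀ with rfl | hi
  · simpa [b'] using hb₀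
  · simpa [b', hi] using hb i
  · exact (convex_convexHull ℝ _).segment_subset (hz' i₁ hne.symm) hb₀' hz₀
  · exact hz' i hi

end Frontier

theorem mem_convexHull_range_iff_exists_stdSimplex {E ι : Type*} [AddCommGroup E] [Module ℝ E]
    [Fintype ι] {v : ι → E} {x : E} :
    x ∈ convexHull ℝ (range v) ↔ ∃ w ∈ stdSimplex ℝ ι, ∑ i, w i • v i = x := by
  classical
  rw [← mem_image, ← convexHull_basis_eq_stdSimplex]
  have : range v =
      Fintype.linearCombination ℝ v '' range fun i j : ι => if i = j then (1 : ℝ) else 0 := by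
    rw [← range_comp]
    congr 1
    ext i
    simp [Fintype.linearCombination_apply]
  rw [this, ← LinearMap.image_convexHull]
  rfl

theorem Matrix.transpose_mul_apply_eq_sum_smul {l m n R : Type*} [Fintype m]
    [CommSemiring R] (A : Matrix l m R) (B : Matrix m n R) (j : n) :
    (A * B)ᵀ j = ∑ i, B i j • Aᵀ i := by
  ext i
  simp [Finset.sum_apply, mul_apply, mul_comm]

theorem rowStoch_iff_forall_mem_stdSimplex {n k : ℕ} {A : Matrix (Fin n) (Fin k) ℝ} :
    RowStoch A ↔ ∀ i, A i ∈ stdSimplex ℝ (Fin k) := by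
  simp only [RowStoch, stdSimplex, mem_ofPred_eq, forall_and]

theorem colStoch_iff_rowStoch_transpose {m c : ℕ} {A : Matrix (Fin m) (Fin c) ℝ} :
    ColStoch A ↔ RowStoch Aᵀ := by
  simp only [ColStoch, RowStoch, transpose_apply]
  rw [forall_comm]

theorem exists_rowStoch {n k : ℕ} (hk : 0 < k) : ∃ A : Matrix (Fin n) (Fin k) ℝ, RowStoch A :=
  ⟨fun _ => Pi.single ⟨0, hk⟩ 1,
    rowStoch_iff_forall_mem_stdSimplex.2 fun _ => single_mem_stdSimplex ℝ _⟩

theorem exists_colStoch {m c : ℕ} (hm : 0 < m) : ∃ A : Matrix (Fin m) (Fin c) ℝ, ColStoch A := by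
  obtain ⟨B, hB⟩ := exists_rowStoch (n := c) hm
  exact ⟨Bᵀ, colStoch_iff_rowStoch_transpose.2 hB⟩

theorem isCompact_setOf_rowStoch {n k : ℕ} :
    IsCompact {A : Matrix (Fin n) (Fin k) ℝ | RowStoch A} := by
  have : {A : Matrix (Fin n) (Fin k) ℝ | RowStoch A} = univ.pi fun _ => stdSimplex ℝ (Fin k) := by
    ext A
    exact rowStoch_iff_forall_mem_stdSimplex.trans mem_univ_pi.symm
  rw [this]
  exact isCompact_univ_pi fun _ => isCompact_stdSimplex ℝ (Fin k)

theorem isCompact_setOf_colStoch {m c : ℕ} :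
    IsCompact {A : Matrix (Fin m) (Fin c) ℝ | ColStoch A} := by
  have : {A : Matrix (Fin m) (Fin c) ℝ | ColStoch A} = transpose '' {B | RowStoch B} := by
    ext A
    refine ⟨fun hA => ⟨Aᵀ, colStoch_iff_rowStoch_transpose.1 hA, transpose_transpose A⟩, ?_⟩
    rintro ⟨B, hB, rfl⟩
    exact colStoch_iff_rowStoch_transpose.2 (by rwa [transpose_transpose])
  rw [this]
  exact isCompact_setOf_rowStoch.image continuous_id.matrix_transpose

theorem transpose_mul_apply_mem_convexHull {k m c : ℕ} (A : Matrix (Fin k) (Fin m) ℝ)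
    {θ : Matrix (Fin m) (Fin c) ℝ} (hθ : ColStoch θ) (h : Fin c) :
    (A * θ)ᵀ h ∈ convexHull ℝ (range Aᵀ) :=
  mem_convexHull_range_iff_exists_stdSimplex.2
    ⟨θᵀ h, rowStoch_iff_forall_mem_stdSimplex.1 (colStoch_iff_rowStoch_transpose.1 hθ) h,
      (transpose_mul_apply_eq_sum_smul A θ h).symm⟩

theorem exists_colStoch_transpose_mul_eq {k m c : ℕ} (A : Matrix (Fin k) (Fin m) ℝ)
    {p : Fin c → Fin k → ℝ} (hp : ∀ h, p h ∈ convexHull ℝ (range Aᵀ)) :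
    ∃ θ : Matrix (Fin m) (Fin c) ℝ, ColStoch θ ∧ ∀ h, (A * θ)ᵀ h = p h := by
  choose w hw hwp using fun h => mem_convexHull_range_iff_exists_stdSimplex.1 (hp h)
  exact ⟨(of w)ᵀ, colStoch_iff_rowStoch_transpose.2 (rowStoch_iff_forall_mem_stdSimplex.2 hw),
    fun h => (transpose_mul_apply_eq_sum_smul A _ h).trans (hwp h)⟩

theorem exists_colStoch_frontier_mul_mul_eq {k m c : ℕ} (hk : 0 < k) (hc : 1 < c)
    (A : Matrix (Fin k) (Fin m) ℝ) {θ : Matrix (Fin m) (Fin c) ℝ} {γ : Matrix (Fin c) (Fin m) ℝ}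
    (hθ : ColStoch θ) (hγ : ColStoch γ) :
    ∃ (θ' : Matrix (Fin m) (Fin c) ℝ) (γ' : Matrix (Fin c) (Fin m) ℝ),
      ColStoch θ' ∧ ColStoch γ' ∧ (∀ h, (A * θ')ᵀ h ∈ frontier (convexHull ℝ (range Aᵀ))) ∧
      A * θ' * γ' = A * θ * γ := by
  have : Nonempty (Fin k) := ⟨⟨0, hk⟩⟩
  have : Nontrivial (Fin c) := Fin.nontrivial_iff_two_le.2 hc
  have hC : IsCompact (convexHull ℝ (range Aᵀ)) := (finite_range _).isCompact_convexHull ℝ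
  obtain ⟨b, hb, hzb⟩ :=
    hC.exists_frontier_convexHull_range (transpose_mul_apply_mem_convexHull A hθ)
  obtain ⟨θ', hθ', hθ'b⟩ :=
    exists_colStoch_transpose_mul_eq A fun h => hC.isClosed.frontier_subset (hb h)
  have hsub : convexHull ℝ (range (A * θ)ᵀ) ⊆ convexHull ℝ (range (A * θ')ᵀ) := by
    rw [show range (A * θ')ᵀ = range b from congrArg range (funext hθ'b)]
    exact convexHull_min (range_subset_iff.2 hzb) (convex_convexHull ℝ _)
  obtain ⟨γ', hγ', hγ'eq⟩ := exists_colStoch_transpose_mul_eq (A * θ') (p := (A * θ * γ)ᵀ)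
    fun j => hsub (transpose_mul_apply_mem_convexHull _ hγ j)
  exact ⟨θ', γ', hθ', hγ', fun h => hθ'b h ▸ hb h, transpose_injective (funext hγ'eq)⟩

theorem exists_rss_minimizer {n m k c : ℕ} (hk : 0 < k) (hm : 0 < m) (hc : 0 < c)
    (X : Matrix (Fin n) (Fin m) ℝ) (Y : Matrix (Fin k) (Fin m) ℝ) :
    ∃ (α : Matrix (Fin n) (Fin k) ℝ) (θ : Matrix (Fin m) (Fin c) ℝ)
      (γ : Matrix (Fin c) (Fin m) ℝ),
      RowStoch α ∧ ColStoch θ ∧ ColStoch γ ∧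
      ∀ (α' : Matrix (Fin n) (Fin k) ℝ) (θ' : Matrix (Fin m) (Fin c) ℝ)
        (γ' : Matrix (Fin c) (Fin m) ℝ),
        RowStoch α' → ColStoch θ' → ColStoch γ' →
        frob2 (X - α * (Y * θ) * γ) ≤ frob2 (X - α' * (Y * θ') * γ') := by
  have hK := (isCompact_setOf_rowStoch (n := n) (k := k)).prod
    ((isCompact_setOf_colStoch (m := m) (c := c)).prod (isCompact_setOf_colStoch (m := c) (c := m)))
  obtain ⟨α₀, hα₀⟩ := exists_rowStoch (n := n) hk
  obtain ⟨θ₀, hθ₀⟩ := exists_colStoch (c := c) hm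
  obtain ⟨γ₀, hγ₀⟩ := exists_colStoch (c := m) hc
  have hf : Continuous fun q : Matrix (Fin n) (Fin k) ℝ × Matrix (Fin m) (Fin c) ℝ ×
      Matrix (Fin c) (Fin m) ℝ => frob2 (X - q.1 * (Y * q.2.1) * q.2.2) := by
    unfold frob2
    fun_prop
  obtain ⟨⟨α, θ, γ⟩, ⟨hα, hθ, hγ⟩, hmin⟩ :=
    hK.exists_isMinOn ⟨(α₀, θ₀, γ₀), hα₀, hθ₀, hγ₀⟩ hf.continuousOn
  refine ⟨α, θ, γ, hα, hθ, hγ, fun α' θ' γ' hα' hθ' hγ' => ?_⟩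
  exact hmin (a := (α', θ', γ')) ⟨hα', hθ', hγ'⟩

theorem stmt_1_general (n m k c : ℕ) (hk1 : 1 < k) (hc1 : 1 < c) (hcm : c < m)
    (X : Matrix (Fin n) (Fin m) ℝ) (β : Matrix (Fin k) (Fin n) ℝ) :
    ∃ (α : Matrix (Fin n) (Fin k) ℝ) (θ : Matrix (Fin m) (Fin c) ℝ)
      (γ : Matrix (Fin c) (Fin m) ℝ),
      RowStoch α ∧ ColStoch θ ∧ ColStoch γ ∧
      (∀ (α' : Matrix (Fin n) (Fin k) ℝ) (θ' : Matrix (Fin m) (Fin c) ℝ)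
         (γ' : Matrix (Fin c) (Fin m) ℝ),
        RowStoch α' → ColStoch θ' → ColStoch γ' →
        frob2 (X - α * (β * X * θ) * γ) ≤ frob2 (X - α' * (β * X * θ') * γ')) ∧
      (∀ h : Fin c,
        (β * X * θ)ᵀ h ∈
          frontier (convexHull ℝ (Set.range fun j : Fin m => (β * X)ᵀ j))) := by
  have hk : 0 < k := zero_lt_one.trans hk1
  obtain ⟨α, θ₀, γ₀, hα, hθ₀, hγ₀, hmin⟩ :=
    exists_rss_minimizer (n := n) (c := c) hk (by omega) (by omega) X (β * X)
  obtain ⟨θ, γ, hθ, hγ, hfrontier, hprod⟩ :=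
    exists_colStoch_frontier_mul_mul_eq hk hc1 (β * X) hθ₀ hγ₀
  refine ⟨α, θ, γ, hα, hθ, hγ, fun α' θ' γ' hα' hθ' hγ' => ?_, hfrontier⟩
  rw [Matrix.mul_assoc α, hprod, ← Matrix.mul_assoc α]
  exact hmin α' θ' γ' hα' hθ' hγ'

/-- Proposition 2: with β fixed row-stochastic and Y = βX, there exist optimal
row-stochastic α and column-stochastic θ, γ minimizing ‖X − α(Yθ)γ‖² such that every
column of the biarchetype matrix Z = βXθ lies on the frontier of the convex hull of
the columns of Y. -/
theorem stmt_1 (n m k c : ℕ) (hk1 : 1 < k) (hkn : k < n) (hc1 : 1 < c) (hcm : c < m)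
    (X : Matrix (Fin n) (Fin m) ℝ) (β : Matrix (Fin k) (Fin n) ℝ) (hβ : RowStoch β) :
    ∃ (α : Matrix (Fin n) (Fin k) ℝ) (θ : Matrix (Fin m) (Fin c) ℝ)
      (γ : Matrix (Fin c) (Fin m) ℝ),
      RowStoch α ∧ ColStoch θ ∧ ColStoch γ ∧
      (∀ (α' : Matrix (Fin n) (Fin k) ℝ) (θ' : Matrix (Fin m) (Fin c) ℝ)
         (γ' : Matrix (Fin c) (Fin m) ℝ),
        RowStoch α' → ColStoch θ' → ColStoch γ' →
        frob2 (X - α * (β * X * θ) * γ) ≤ frob2 (X - α' * (β * X * θ') * γ')) ∧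
      (∀ h : Fin c,
        (β * X * θ)ᵀ h ∈
          frontier (convexHull ℝ (Set.range fun j : Fin m => (β * X)ᵀ j))) :=
  stmt_1_general n m k c hk1 hc1 hcm X β
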